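/- arXiv:cs/0611161 — 3 statements merged into one kernel-verified Lean document; each statement's English description precedes it below -/
import Mathlib

section
/- With the generalized Gray map φ: ℤ/2^h → (ℤ/2)^{2^{h−1}} (h ≥ 2) written as φ(a) = (β(a), γ(a)) where β(a) and γ(a) are the first and second halves of length 2^{h−2}, one has for all a ∈ ℤ/2^h: β(a − 2^{h−2}) equals the bitwise complement of γ(a), and γ(a − 2^{h−2}) = β(a). -/
open Finset

/-- Hamming weight of a binary word. -/
def wtH {m : ℕ} (c : Fin m → ZMod 2) : ℕ := (Finset.univ.filter fun i => c i ≠ 0).card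

/-- The generalized Gray map `φ : ℤ/2^h → (ℤ/2)^{2^{h-1}}`. -/
def grayMap (h : ℕ) (a : ZMod (2 ^ h)) : Fin (2 ^ (h - 1)) → ZMod 2 := fun i =>
  if a.val ≤ 2 ^ (h - 1) then (if 2 ^ (h - 1) - a.val ≤ (i : ℕ) then 1 else 0)
  else (if (i : ℕ) < 2 ^ h - a.val then 1 else 0)

/-- First half of the generalized Gray map. -/
def grayβ (h : ℕ) (hh : 2 ≤ h) (a : ZMod (2 ^ h)) : Fin (2 ^ (h - 2)) → ZMod 2 := fun i =>
  grayMap h a ⟨(i : ℕ), lt_of_lt_of_le i.2 (Nat.pow_le_pow_right (by norm_num) (by omega))⟩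

/-- Second half of the generalized Gray map. -/
def grayγ (h : ℕ) (hh : 2 ≤ h) (a : ZMod (2 ^ h)) : Fin (2 ^ (h - 2)) → ZMod 2 := fun i =>
  grayMap h a ⟨2 ^ (h - 2) + (i : ℕ), by
    have h1 : h - 1 = (h - 2) + 1 := by omega
    rw [h1, pow_succ]
    have := i.2
    omega⟩

theorem gray_beta_gamma_shift (h : ℕ) (hh : 2 ≤ h) (a : ZMod (2 ^ h)) :
    grayβ h hh (a - (2 ^ (h - 2) : ℕ)) = (fun i => grayγ h hh a i + 1) ∧
      grayγ h hh (a - (2 ^ (h - 2) : ℕ)) = grayβ h hh a := by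
  have hq1 : (1:ℕ) ≤ 2 ^ (h - 2) := Nat.one_le_two_pow
  have h1 : 2 ^ (h - 1) = 2 * 2 ^ (h - 2) := by
    conv_lhs => rw [show h - 1 = (h - 2) + 1 by omega]
    rw [pow_succ]; ring
  have h0 : 2 ^ h = 4 * 2 ^ (h - 2) := by
    conv_lhs => rw [show h = (h - 2) + 2 by omega]
    rw [pow_add]; ring
  haveI : NeZero (2 ^ h) := ⟨by positivity⟩
  have hv : a.val < 2 ^ h := ZMod.val_lt a
  have hcast : ((2 ^ h - 2 ^ (h - 2) : ℕ) : ZMod (2 ^ h)) = -((2 ^ (h - 2) : ℕ) : ZMod (2 ^ h)) := by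
    rw [Nat.cast_sub (by omega)]
    simp
  have hval : (a - (2 ^ (h - 2) : ℕ)).val =
      if 2 ^ (h - 2) ≤ a.val then a.val - 2 ^ (h - 2) else a.val + 2 ^ h - 2 ^ (h - 2) := by
    rw [sub_eq_add_neg, ← hcast, ZMod.val_add, ZMod.val_natCast,
      Nat.mod_eq_of_lt (show 2 ^ h - 2 ^ (h - 2) < 2 ^ h by omega)]
    split_ifs with hc
    · rw [show a.val + (2 ^ h - 2 ^ (h - 2)) = (a.val - 2 ^ (h - 2)) + 2 ^ h by omega,
        Nat.add_mod_right, Nat.mod_eq_of_lt (by omega)]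
    · rw [Nat.mod_eq_of_lt (by omega)]; omega
  constructor <;> funext i <;> have hi := i.2 <;>
    simp only [grayβ, grayγ, grayMap, hval] <;>
    split_ifs <;> first | rfl | decide | omega
end

section
/- With the generalized Gray map φ(a) = (β(a), γ(a)) on ℤ/2^h (h ≥ 2), for all a ∈ ℤ/2^h and b ∈ ℤ/2 one has β(a + 2^{h−1}·b) = β(a) + β(2^{h−1}·b), where addition on the right is componentwise in (ℤ/2)^{2^{h−2}}. Moreover β(2^{h−1}·b) is the constant vector (b, b, …, b). -/
open Finset

theorem gray_beta_additive (h : ℕ) (hh : 2 ≤ h) (a : ZMod (2 ^ h)) (b : ZMod 2) :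
    (grayβ h hh (a + (2 ^ (h - 1) : ℕ) * (b.val : ZMod (2 ^ h))) =
      fun i => grayβ h hh a i + grayβ h hh ((2 ^ (h - 1) : ℕ) * (b.val : ZMod (2 ^ h))) i) ∧
    grayβ h hh ((2 ^ (h - 1) : ℕ) * (b.val : ZMod (2 ^ h))) = fun _ => b := by
  have hN : NeZero (2 ^ h) := ⟨by positivity⟩
  have hMN : 2 ^ (h - 1) < 2 ^ h := Nat.pow_lt_pow_right (by norm_num) (by omega)
  have hN2 : 2 ^ h = 2 ^ (h - 1) + 2 ^ (h - 1) := by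
    rw [← two_mul, ← pow_succ']
    congr 1
    omega
  have hM2 : 2 ^ (h - 1) = 2 ^ (h - 2) + 2 ^ (h - 2) := by
    rw [← two_mul, ← pow_succ']
    congr 1
    omega
  have hav : a.val < 2 ^ h := ZMod.val_lt a
  obtain hb | hb : b = 0 ∨ b = 1 := by revert b; decide
  all_goals subst hb
  · have hz : (((0 : ZMod 2).val : ℕ) : ZMod (2 ^ h)) = 0 := by
      simp
    rw [hz, mul_zero, add_zero]
    have hg0 : grayβ h hh (0 : ZMod (2 ^ h)) = fun _ => 0 := by
      funext i
      have hi := i.2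
      simp only [grayβ, grayMap, ZMod.val_zero]
      rw [if_pos (by omega), if_neg (by omega)]
    constructor
    · funext i
      rw [hg0]
      simp
    · rw [hg0]
  · have ho : (((1 : ZMod 2).val : ℕ) : ZMod (2 ^ h)) = 1 := by
      have h1 : (1 : ZMod 2).val = 1 := rfl
      rw [h1, Nat.cast_one]
    rw [ho, mul_one]
    have hvM : ((2 ^ (h - 1) : ℕ) : ZMod (2 ^ h)).val = 2 ^ (h - 1) := by
      rw [ZMod.val_natCast, Nat.mod_eq_of_lt hMN]
    have hvadd : (a + ((2 ^ (h - 1) : ℕ) : ZMod (2 ^ h))).val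
        = (a.val + 2 ^ (h - 1)) % 2 ^ h := by
      rw [ZMod.val_add, hvM]
    have hgM : grayβ h hh ((2 ^ (h - 1) : ℕ) : ZMod (2 ^ h)) = fun _ => 1 := by
      funext i
      simp only [grayβ, grayMap, hvM]
      rw [if_pos le_rfl, if_pos (by omega)]
    refine ⟨?_, hgM⟩
    funext i
    rw [hgM]
    have hi := i.2
    simp only [grayβ, grayMap, hvadd]
    have hmod : (a.val + 2 ^ (h - 1)) % 2 ^ h =
        if a.val < 2 ^ (h - 1) then a.val + 2 ^ (h - 1) else a.val - 2 ^ (h - 1) := by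
      split_ifs with hc
      · exact Nat.mod_eq_of_lt (by omega)
      · rw [Nat.mod_eq_sub_mod (by omega), Nat.mod_eq_of_lt (by omega)]
        omega
    rw [hmod]
    split_ifs <;> first
      | decide
      | omega
end

section
/- For h ≥ 2 and any a ∈ (ℤ/2^h)^n, wt_L(a) + wt_L(a − 2^{h−2}·𝟙) = 2·wt_H(β(a)) + 2^{h−2}·n, where 𝟙 is the all-ones vector, wt_L is the coordinatewise sum of Lee weights, and β is the first-half Gray map applied coordinatewise. -/
open Finset

/-- Lee weight of a word over `ℤ/2^h`. -/
def wtL {h n : ℕ} (a : Fin n → ZMod (2 ^ h)) : ℕ :=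
  ∑ i : Fin n, min (a i).val (2 ^ h - (a i).val)

/-!
`β(a)` is a run of ones whose position and length are read off `a.val`, so its Hamming weight, like
the two Lee weights, is an explicit piecewise-linear function of `a.val`. With `q = 2^(h-2)`, the
identity then holds coordinatewise, by comparing these functions on each quarter `[jq, (j+1)q)`.
-/

theorem Fin.card_filter_le_val (n c : ℕ) : #{i : Fin n | c ≤ (i : ℕ)} = n - c := by
  have hsplit := card_filter_add_card_filter_not (s := (univ : Finset (Fin n)))
    (fun i : Fin n => (i : ℕ) < c)
  simp only [not_lt, card_univ, Fintype.card_fin, Fin.card_filter_val_lt] at hsplit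
  omega

theorem ZMod.val_sub_natCast_of_lt {n b : ℕ} [NeZero n] (hb : b < n) (a : ZMod n) :
    (a - (b : ZMod n)).val = if b ≤ a.val then a.val - b else a.val + (n - b) := by
  have hbval : (b : ZMod n).val = b := ZMod.val_cast_of_lt hb
  split_ifs with hba
  · rw [ZMod.val_sub (hbval.symm ▸ hba), hbval]
  · have hcast : a - (b : ZMod n) = a + ((n - b : ℕ) : ZMod n) := by
      rw [Nat.cast_sub hb.le, ZMod.natCast_self, zero_sub, sub_eq_add_neg]
    rw [hcast, ZMod.val_add_of_lt] <;> rw [ZMod.val_cast_of_lt (by omega)]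
    omega

theorem wtH_grayβ (h : ℕ) (hh : 2 ≤ h) (a : ZMod (2 ^ h)) :
    wtH (grayβ h hh a) =
      if a.val ≤ 2 ^ (h - 1) then 2 ^ (h - 2) - (2 ^ (h - 1) - a.val)
      else min (2 ^ (h - 2)) (2 ^ h - a.val) := by
  unfold wtH grayβ grayMap
  split_ifs
  · simp only [ne_eq, ite_eq_right_iff, one_ne_zero, imp_false, not_not, Fin.card_filter_le_val]
  · simp only [ne_eq, ite_eq_right_iff, one_ne_zero, imp_false, not_not, Fin.card_filter_val_lt]

def leeWt {h : ℕ} (x : ZMod (2 ^ h)) : ℕ := min x.val (2 ^ h - x.val)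

theorem wtL_eq_sum_leeWt {h n : ℕ} (a : Fin n → ZMod (2 ^ h)) : wtL a = ∑ i, leeWt (a i) := rfl

theorem leeWt_add_leeWt_sub (h : ℕ) (hh : 2 ≤ h) (a : ZMod (2 ^ h)) :
    leeWt a + leeWt (a - ((2 ^ (h - 2) : ℕ) : ZMod (2 ^ h))) =
      2 * wtH (grayβ h hh a) + 2 ^ (h - 2) := by
  obtain ⟨k, rfl⟩ : ∃ k, h = k + 2 := ⟨h - 2, by omega⟩
  have hk : 0 < 2 ^ k := Nat.two_pow_pos k
  have ha : a.val < 2 ^ (k + 2) := ZMod.val_lt a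
  rw [leeWt, leeWt, wtH_grayβ]
  simp only [Nat.add_sub_cancel, Nat.add_succ_sub_one]
  rw [ZMod.val_sub_natCast_of_lt (by rw [pow_succ, pow_succ]; omega)]
  generalize a.val = v at ha ⊢
  simp only [pow_succ] at ha ⊢
  split_ifs <;> omega

theorem lee_weight_beta_identity (h : ℕ) (hh : 2 ≤ h) (n : ℕ) (a : Fin n → ZMod (2 ^ h)) :
    wtL a + wtL (fun i => a i - ((2 ^ (h - 2) : ℕ) : ZMod (2 ^ h))) =
      2 * (∑ i : Fin n, wtH (grayβ h hh (a i))) + 2 ^ (h - 2) * n := by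
  rw [wtL_eq_sum_leeWt, wtL_eq_sum_leeWt, ← sum_add_distrib]
  simp only [leeWt_add_leeWt_sub h hh, sum_add_distrib, mul_sum, sum_const, card_univ,
    Fintype.card_fin, smul_eq_mul, mul_comm]
end
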